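/- arXiv:1403.7557 — 7 statements merged into one kernel-verified Lean document; each statement's English description precedes it below -/
import Mathlib

section
/- Let a, b ∈ Q with 4a³+27b² ≠ 0, Δ = -16(4a³+27b²), and let E_{λ,μ}: y² = x³ - 27𝔠₄(λ,μ)x - 54𝔠₆(λ,μ) where c₄ = -a/27, c₆ = -b/54, 𝔠₄(λ,μ) = c₄λ⁴ + 4c₆λ³μ + 6c₄²λ²μ² + 4c₄c₆λμ³ - (3c₄³ - 4c₆²)μ⁴ and 𝔠₆(λ,μ) = c₆λ⁶ + 6c₄²λ⁵μ + 15c₄c₆λ⁴μ² + 20c₆²λ³μ³ + 15c₄²c₆λ²μ⁴ + 6(3c₄⁴ - 2c₄c₆²)λμ⁵ + (9c₄³c₆ - 8c₆³)μ⁶. Then the discriminant of E_{λ,μ} equals Δ · (λ⁴ + (2a/9)λ²μ² + (4/27)bλμ³ - (1/243)a²μ⁴)³. -/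
/-- The discriminant of `y² = x³ + Ax + B`. -/
def disc (A B : ℚ) : ℚ := -16 * (4 * A ^ 3 + 27 * B ^ 2)

theorem disc_E_lambda_mu (a b lam mu : ℚ) (h : 4 * a ^ 3 + 27 * b ^ 2 ≠ 0) :
    let c4 : ℚ := -a / 27
    let c6 : ℚ := -b / 54
    let C4 : ℚ := c4 * lam ^ 4 + 4 * c6 * lam ^ 3 * mu + 6 * c4 ^ 2 * lam ^ 2 * mu ^ 2 +
      4 * c4 * c6 * lam * mu ^ 3 - (3 * c4 ^ 3 - 4 * c6 ^ 2) * mu ^ 4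
    let C6 : ℚ := c6 * lam ^ 6 + 6 * c4 ^ 2 * lam ^ 5 * mu + 15 * c4 * c6 * lam ^ 4 * mu ^ 2 +
      20 * c6 ^ 2 * lam ^ 3 * mu ^ 3 + 15 * c4 ^ 2 * c6 * lam ^ 2 * mu ^ 4 +
      6 * (3 * c4 ^ 4 - 2 * c4 * c6 ^ 2) * lam * mu ^ 5 + (9 * c4 ^ 3 * c6 - 8 * c6 ^ 3) * mu ^ 6
    disc (-27 * C4) (-54 * C6) =
      disc a b * (lam ^ 4 + (2 * a / 9) * lam ^ 2 * mu ^ 2 + (4 / 27) * b * lam * mu ^ 3 -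
        (1 / 243) * a ^ 2 * mu ^ 4) ^ 3 := by
  simp only [disc]; ring
end

section
/- The quartic equation 3y² = -3x⁴ + 6x² + 1 has no solution in the 3-adic numbers Q_3, and in particular no rational solution. -/
open scoped Classical

lemma norm3 : ‖(3 : ℚ_[3])‖ = 3⁻¹ := by
  have := @Padic.norm_p 3 ⟨by norm_num⟩
  simpa using this

lemma discrete3 {a : ℚ_[3]} (h : 1 < ‖a‖) : 3 ≤ ‖a‖ := by
  have ha : a ≠ 0 := by
    intro h0; rw [h0, norm_zero] at h; linarith
  rw [Padic.norm_eq_zpow_neg_valuation ha] at h ⊢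
  have h3 : (1 : ℝ) < (3 : ℕ) := by norm_num
  rw [show (1:ℝ) = ((3:ℕ):ℝ) ^ (0:ℤ) by simp] at h
  rw [zpow_lt_zpow_iff_right₀ h3] at h
  calc (3:ℝ) = ((3:ℕ):ℝ) ^ (1:ℤ) := by norm_num
    _ ≤ ((3:ℕ):ℝ) ^ (-Padic.valuation a) := by
        apply zpow_le_zpow_right₀ (le_of_lt h3); omega

lemma toZMod_eq_zero {a : ℤ_[3]} (h : ‖a‖ < 1) : PadicInt.toZMod a = 0 := by
  have : a ∈ IsLocalRing.maximalIdeal ℤ_[3] := by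
    rwa [PadicInt.maximalIdeal_eq_span_p, Ideal.mem_span_singleton,
      ← PadicInt.norm_lt_one_iff_dvd]
  rw [← RingHom.mem_ker, PadicInt.ker_toZMod]
  exact this

lemma padic_case : ¬ ∃ x y : ℚ_[3], 3 * y ^ 2 = -3 * x ^ 4 + 6 * x ^ 2 + 1 := by
  rintro ⟨x, y, h⟩
  have h3 : ‖(3 : ℚ_[3])‖ = 3⁻¹ := norm3
  by_cases hx : ‖x‖ ≤ 1
  · by_cases hy : ‖y‖ ≤ 1
    · -- both integral: contradiction mod 3
      set X : ℤ_[3] := ⟨x, hx⟩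
      set Y : ℤ_[3] := ⟨y, hy⟩
      have hZ : 3 * Y ^ 2 = -3 * X ^ 4 + 6 * X ^ 2 + 1 := by
        apply Subtype.coe_injective
        push_cast
        exact h
      have := congrArg PadicInt.toZMod hZ
      simp only [map_mul, map_add, map_pow, map_neg, map_one, map_ofNat] at this
      have key : ∀ a b : ZMod 3, 3 * b ^ 2 ≠ -3 * a ^ 4 + 6 * a ^ 2 + 1 := by decide
      exact key _ _ this
    · -- ‖y‖ > 1 : norm contradiction
      push_neg at hy
      have hy3 : 3 ≤ ‖y‖ := discrete3 hy
      have hL : ‖3 * y ^ 2‖ = 3⁻¹ * ‖y‖ ^ 2 := by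
        rw [norm_mul, norm_pow, h3]
      have hR : ‖-3 * x ^ 4 + 6 * x ^ 2 + 1‖ ≤ 1 := by
        refine le_trans (Padic.nonarchimedean _ _) ?_
        have h1 : ‖-3 * x ^ 4 + 6 * x ^ 2‖ ≤ 1 := by
          refine le_trans (Padic.nonarchimedean _ _) ?_
          have hn3 : ‖(-3 : ℚ_[3])‖ ≤ 1 := by
            rw [norm_neg, h3]; norm_num
          have hn6 : ‖(6 : ℚ_[3])‖ ≤ 1 := by
            have := @Padic.norm_int_le_one 3 ⟨by norm_num⟩ 6
            simpa using this
          have hx4 : ‖x ^ 4‖ ≤ 1 := by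
            rw [norm_pow]; exact pow_le_one₀ (norm_nonneg _) hx
          have hx2 : ‖x ^ 2‖ ≤ 1 := by
            rw [norm_pow]; exact pow_le_one₀ (norm_nonneg _) hx
          rw [norm_mul, norm_mul]
          apply max_le
          · exact mul_le_one₀ hn3 (norm_nonneg _) hx4
          · exact mul_le_one₀ hn6 (norm_nonneg _) hx2
        exact max_le h1 norm_one.le
      rw [h, hL] at * -- hL no longer needed; use equality
      nlinarith [hR, hy3, norm_nonneg y]
  · -- ‖x‖ > 1 : substitute z = x⁻¹
    push_neg at hx
    have hx3 : 3 ≤ ‖x‖ := discrete3 hx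
    have hx0 : x ≠ 0 := by
      intro h0; rw [h0, norm_zero] at hx; linarith
    set z : ℚ_[3] := x⁻¹ with hzdef
    have hz : ‖z‖ ≤ 3⁻¹ := by
      rw [hzdef, norm_inv]
      exact inv_anti₀ (by norm_num) hx3
    have hz1 : ‖z‖ ≤ 1 := le_trans hz (by norm_num)
    set w : ℚ_[3] := y * z ^ 2 with hwdef
    have e1 : 3 * w ^ 2 = -3 + 6 * z ^ 2 + z ^ 4 := by
      rw [hwdef, hzdef]
      field_simp
      linear_combination h
    -- norm bound on w
    have hn6 : ‖(6 : ℚ_[3])‖ ≤ 1 := by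
      have := @Padic.norm_int_le_one 3 ⟨by norm_num⟩ 6
      simpa using this
    have hw : ‖w‖ ≤ 1 := by
      have hRn : ‖-3 + 6 * z ^ 2 + z ^ 4‖ ≤ 3⁻¹ := by
        refine le_trans (Padic.nonarchimedean _ _) ?_
        apply max_le
        · refine le_trans (Padic.nonarchimedean _ _) ?_
          apply max_le
          · rw [norm_neg, h3]
          · rw [norm_mul, norm_pow]
            calc ‖(6:ℚ_[3])‖ * ‖z‖ ^ 2 ≤ 1 * (3⁻¹)^2 := by
                  apply mul_le_mul hn6 (pow_le_pow_left₀ (norm_nonneg _) hz 2)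
                    (by positivity) (by norm_num)
              _ ≤ 3⁻¹ := by norm_num
        · rw [norm_pow]
          calc ‖z‖ ^ 4 ≤ (3⁻¹ : ℝ) ^ 4 := pow_le_pow_left₀ (norm_nonneg _) hz 4
            _ ≤ 3⁻¹ := by norm_num
      have hLn : ‖3 * w ^ 2‖ = 3⁻¹ * ‖w‖ ^ 2 := by rw [norm_mul, norm_pow, h3]
      rw [e1] at hLn
      nlinarith [norm_nonneg w]
    have hs : ‖z ^ 4 / 9‖ ≤ 1 := by
      rw [norm_div, norm_pow]
      have h9 : ‖(9 : ℚ_[3])‖ = 9⁻¹ := by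
        have : (9 : ℚ_[3]) = 3 * 3 := by norm_num
        rw [this, norm_mul, h3]; norm_num
      rw [h9]
      have : ‖z‖ ^ 4 ≤ (3⁻¹ : ℝ) ^ 4 := pow_le_pow_left₀ (norm_nonneg _) hz 4
      rw [div_le_one (by norm_num)]
      calc ‖z‖^4 ≤ (3⁻¹:ℝ)^4 := this
        _ ≤ 9⁻¹ := by norm_num
    have e2 : w ^ 2 = -1 + 2 * z ^ 2 + 3 * (z ^ 4 / 9) := by
      have h30 : (3 : ℚ_[3]) ≠ 0 := by
        intro h0
        rw [h0, norm_zero] at h3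
        norm_num at h3
      field_simp
      linear_combination 3 * e1
    set W : ℤ_[3] := ⟨w, hw⟩
    set Z : ℤ_[3] := ⟨z, hz1⟩
    set S : ℤ_[3] := ⟨z ^ 4 / 9, hs⟩
    have hZeq : W ^ 2 = -1 + 2 * Z ^ 2 + 3 * S := by
      apply Subtype.coe_injective
      push_cast
      exact e2
    have hZ0 : PadicInt.toZMod Z = 0 := by
      apply toZMod_eq_zero
      show ‖z‖ < 1
      calc ‖z‖ ≤ 3⁻¹ := hz
        _ < 1 := by norm_num
    have := congrArg PadicInt.toZMod hZeq
    simp only [map_mul, map_add, map_pow, map_neg, map_one, map_ofNat, hZ0] at this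
    have key : ∀ a s : ZMod 3, a ^ 2 ≠ -1 + 2 * 0 ^ 2 + 3 * s := by decide
    exact key _ _ this

theorem quartic_not_locally_soluble_at_3 :
    (¬ ∃ x y : ℚ_[3], 3 * y ^ 2 = -3 * x ^ 4 + 6 * x ^ 2 + 1) ∧
    (¬ ∃ x y : ℚ, 3 * y ^ 2 = -3 * x ^ 4 + 6 * x ^ 2 + 1) := by
  constructor
  · exact padic_case
  · rintro ⟨x, y, h⟩
    apply padic_case
    refine ⟨(x : ℚ_[3]), (y : ℚ_[3]), ?_⟩
    exact_mod_cast congrArg (fun q : ℚ => (q : ℚ_[3])) h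
end

section
/- Let a, b ∈ Q with 4a³+27b² ≠ 0, D = -16(4a³+27b²), and suppose x + 12a ≠ 0. If (x,y) satisfies y² = x³ - 27D, then the point (λ, w) with λ = (-y/6 - 18b)/(x + 12a) and w = ((1/18)x³ + ax² - (1/36)y² - 6by - 48a³ - 324b²)/(x + 12a)² satisfies w² = λ⁴ + 2aλ² + 4bλ - a²/3. -/
theorem jacobian_to_quartic (a b x y : ℚ) (hab : 4 * a ^ 3 + 27 * b ^ 2 ≠ 0)
    (hx : x + 12 * a ≠ 0)
    (h : y ^ 2 = x ^ 3 - 27 * (-16 * (4 * a ^ 3 + 27 * b ^ 2))) :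
    let lam : ℚ := (-y / 6 - 18 * b) / (x + 12 * a)
    let w : ℚ := ((1 / 18) * x ^ 3 + a * x ^ 2 - (1 / 36) * y ^ 2 - 6 * b * y -
      48 * a ^ 3 - 324 * b ^ 2) / (x + 12 * a) ^ 2
    w ^ 2 = lam ^ 4 + 2 * a * lam ^ 2 + 4 * b * lam - a ^ 2 / 3 := by
  intro lam w
  have key : ((1 / 18) * x ^ 3 + a * x ^ 2 - (1 / 36) * y ^ 2 - 6 * b * y -
      48 * a ^ 3 - 324 * b ^ 2) ^ 2 =
      (-y / 6 - 18 * b) ^ 4 + 2 * a * (-y / 6 - 18 * b) ^ 2 * (x + 12 * a) ^ 2 +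
      4 * b * (-y / 6 - 18 * b) * (x + 12 * a) ^ 3 - a ^ 2 / 3 * (x + 12 * a) ^ 4 := by
    linear_combination (-(x^3)/324 - a*x^2/9 - 4*a^2*x/3 - 16*a^3/3) * h
  show _ = _
  simp only [lam, w, div_pow]
  rw [key]
  have hx' : x + a * 12 ≠ 0 := by rwa [mul_comm] at hx
  field_simp
end

section
/- Let t ∈ Q be nonzero, a = -(8/27)t², b = (64/729)t³. Then the point (x₁,...,x₆) = (-2⁹t⁴/2187, 2⁶t³/243, (2/9)t, -2⁶t³/243, (2⁵/27)t², 1) satisfies all nine quadrics s₁,...,s₉ defining X⁻_E(6) for E: y² = x³ + ax + b. -/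
/-- Discriminant of `y² = x³ + ax + b`. -/
def D (a b : ℚ) : ℚ := -16 * (4 * a ^ 3 + 27 * b ^ 2)

/-- The nine quadrics defining `X⁻_E(6)` from Theorem 1.1. -/
def s1 (a b x1 x2 x3 x4 x5 x6 : ℚ) : ℚ :=
  -6*x1*x5 + 24*a*x1*x6 - 6*x2^2 + 24*a*x2*x3 - 6*x2*x4 + 24*a*x3*x4
    + 72*b*x4*x6 + 2*a*x5^2 + 8*a^2*x5*x6 + D a b * x6^2

def s2 (a b x1 x2 x3 x4 x5 x6 : ℚ) : ℚ :=
  -6*x1*x3 + x2*x5 + 2*a*x2*x6 - 36*b*x3^2 + 2*a*x3*x5 + 16*a^2*x3*x6 + x4*x5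
    + 2*a*x4*x6 + 12*a*b*x6^2

def s3 (a b x1 x2 x3 x4 x5 x6 : ℚ) : ℚ :=
  12*a*x1*x3 + 18*b*x1*x6 + 18*b*x3*x4 - 2*a*x4*x5 - 4*a^2*x4*x6 + 3*b*x5^2

def s4 (a b x1 x2 x3 x4 x5 x6 : ℚ) : ℚ :=
  -12*a*x2*x3 - 18*b*x2*x6 - 18*b*x3*x5 - 3*x4^2 - a*x5^2 + 4*a^2*x5*x6

def s5 (a b x1 x2 x3 x4 x5 x6 : ℚ) : ℚ :=
  3*x2^2 - 48*a^2*x3^2 - 144*a*b*x3*x6 - 36*b*x4*x6 + a*x5^2 - 8*a^2*x5*x6 + 16*a^3*x6^2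

def s6 (a b x1 x2 x3 x4 x5 x6 : ℚ) : ℚ :=
  -3*x1*x4 + 18*b*x2*x3 - a*x2*x5 - 4*a^2*x2*x6 - 4*a^2*x3*x5 - 6*a*b*x5*x6

def s7 (a b x1 x2 x3 x4 x5 x6 : ℚ) : ℚ :=
  -108*b*x1*x3 + 6*a*x2^2 - 24*a^2*x2*x3 + 18*b*x2*x5 - 36*a*b*x4*x6 - 2*a^2*x5^2
    - 8*a^3*x5*x6 - a * D a b * x6^2

def s8 (a b x1 x2 x3 x4 x5 x6 : ℚ) : ℚ :=
  3*x1*x2 - 72*a*b*x3^2 - 216*b^2*x3*x6 + a*x4*x5 + 8*a^2*x4*x6 - 12*a*b*x5*x6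
    + 24*a^2*b*x6^2

def s9 (a b x1 x2 x3 x4 x5 x6 : ℚ) : ℚ :=
  36*x1^2 + 12*a*x2^2 + 12*a*x4^2 + 4*a^2*x5^2 + D a b * x5*x6

/-- `(x₁,…,x₆)` lies on all nine quadrics. -/
def OnXminus6 (a b x1 x2 x3 x4 x5 x6 : ℚ) : Prop :=
  s1 a b x1 x2 x3 x4 x5 x6 = 0 ∧ s2 a b x1 x2 x3 x4 x5 x6 = 0 ∧
  s3 a b x1 x2 x3 x4 x5 x6 = 0 ∧ s4 a b x1 x2 x3 x4 x5 x6 = 0 ∧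
  s5 a b x1 x2 x3 x4 x5 x6 = 0 ∧ s6 a b x1 x2 x3 x4 x5 x6 = 0 ∧
  s7 a b x1 x2 x3 x4 x5 x6 = 0 ∧ s8 a b x1 x2 x3 x4 x5 x6 = 0 ∧
  s9 a b x1 x2 x3 x4 x5 x6 = 0

theorem rational_point_on_Xminus6 (t : ℚ) (ht : t ≠ 0) :
    OnXminus6 (-(8/27) * t ^ 2) ((64/729) * t ^ 3)
      (-2 ^ 9 * t ^ 4 / 2187) (2 ^ 6 * t ^ 3 / 243) ((2/9) * t)
      (-2 ^ 6 * t ^ 3 / 243) ((2 ^ 5 / 27) * t ^ 2) 1 := by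
  refine ⟨?_,?_,?_,?_,?_,?_,?_,?_,?_⟩ <;> simp only [s1,s2,s3,s4,s5,s6,s7,s8,s9,D] <;> ring
end

section
/- If (x₁,...,x₆) with x₆ = 1 satisfies the nine quadrics s₁,...,s₉ defining X⁻_E(6), then setting x = x₃, y = (-x₁x₅+x₂x₄)/2 gives y² = Δ_E(ax⁴ + 6bx³ - 2a²x² - 2abx - a³/3 - 3b²). -/
theorem forgetful_to_CXminus (a b x1 x2 x3 x4 x5 : ℚ)
    (h : OnXminus6 a b x1 x2 x3 x4 x5 1) :
    ((-x1 * x5 + x2 * x4) / 2) ^ 2 =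
      D a b * (a * x3 ^ 4 + 6 * b * x3 ^ 3 - 2 * a ^ 2 * x3 ^ 2 - 2 * a * b * x3
        - a ^ 3 / 3 - 3 * b ^ 2) := by
  obtain ⟨h1, h2, h3, h4, h5, h6, h7, h8, h9⟩ := h
  simp only [s1, s2, s3, s4, s5, s6, s7, s8, s9, D] at h1 h2 h3 h4 h5 h6 h7 h8 h9
  simp only [D]
  linear_combination
    ((11/32 : ℚ)*x4^2 + (-1/16 : ℚ)*x2^2 + (1/4 : ℚ)*b*x4 + (1/16 : ℚ)*b*x3*x5 + (1/16 : ℚ)*b*x2 + (3 : ℚ)*b^2 + (1/96 : ℚ)*a*x5^2 + a*x3*x4 + (1/24 : ℚ)*a*x2*x3 + (-1 : ℚ)*a*b*x3 + (1/24 : ℚ)*a^2*x5 + (-1 : ℚ)*a^2*x3^2 + (1/3 : ℚ)*a^3) * h1 +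
    (b*x5^2 + (12 : ℚ)*b*x1 + (-72 : ℚ)*b^2*x3 + (-5/3 : ℚ)*a*x4*x5 + (2 : ℚ)*a*x1*x3 + (2 : ℚ)*a*b*x5 + (-12 : ℚ)*a*b*x3^2 + (14/3 : ℚ)*a^2*x4 + (8/3 : ℚ)*a^2*x3*x5 + (-4 : ℚ)*a^2*b + (-32/3 : ℚ)*a^3*x3) * h2 +
    ((-1/3 : ℚ)*x4*x5 + (-1/3 : ℚ)*x2*x5 + x1*x3 + b*x5 + (1/3 : ℚ)*a*x4 + (4/3 : ℚ)*a*x2) * h3 +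
    ((-11/16 : ℚ)*x2*x4 + (5/48 : ℚ)*x2^2 + (-3/16 : ℚ)*x1*x5 + (-9/4 : ℚ)*b*x4 + (-2 : ℚ)*b*x3*x5 + b*x2 + (-3/2 : ℚ)*b^2 + (31/144 : ℚ)*a*x5^2 + (11/4 : ℚ)*a*x3*x4 + (3/4 : ℚ)*a*x2*x3 + (11/4 : ℚ)*a*x1 + (-10 : ℚ)*a*b*x3 + (-3/4 : ℚ)*a^2*x5 + (-6 : ℚ)*a^2*x3^2) * h4 +
    ((7/8 : ℚ)*x4^2 + (-1/8 : ℚ)*x2*x4 + (-1/8 : ℚ)*x2^2 + (-1/8 : ℚ)*x1*x5 + (-7/2 : ℚ)*b*x4 + (-1/4 : ℚ)*b*x3*x5 + (3/4 : ℚ)*b*x2 + (3 : ℚ)*b^2 + (1/6 : ℚ)*a*x5^2 + (-1/2 : ℚ)*a*x3*x4 + a*x2*x3 + (3/2 : ℚ)*a*x1 + (-4/3 : ℚ)*a^2*x3^2) * h5 +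
    ((-1/2 : ℚ)*x4*x5 + (1/6 : ℚ)*x2*x5 + (3 : ℚ)*b*x5) * h6 +
    ((1/6 : ℚ)*x3*x4 + (-1/2 : ℚ)*x1) * h7 +
    ((1/144 : ℚ)*x5^2) * h9
end

section
/- Let a, b ∈ Q with 4a³+27b² ≠ 0 and D = -16(4a³+27b²). Suppose (λ, μ, y) satisfies y²D = (2³⁶·3³⁶·a²/D⁴)·h(λ,μ)³ where h(λ,μ) = aλ⁴ + 2bλ³μ - (2/9)a²λ²μ² - (2/27)abλμ³ + (-(1/243)a³ - (1/27)b²)μ⁴ and h(λ,μ) ≠ 0, a ≠ 0. Then the point (λ', μ', y') = (3λ, μ, yD³/(2¹⁸·3¹⁶·a·h(λ,μ))) satisfies y'² = D(aλ'⁴ + 6bλ'³μ' - 2a²λ'²μ'² - 2abλ'μ'³ + (-a³/3 - 3b²)μ'⁴). -/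
theorem Xminus_birational_model (a b lam mu y : ℚ)
    (hab : 4 * a ^ 3 + 27 * b ^ 2 ≠ 0) (ha : a ≠ 0) :
    let D : ℚ := -16 * (4 * a ^ 3 + 27 * b ^ 2)
    let h : ℚ := a * lam ^ 4 + 2 * b * lam ^ 3 * mu - (2 / 9) * a ^ 2 * lam ^ 2 * mu ^ 2 -
      (2 / 27) * a * b * lam * mu ^ 3 + (-(1 / 243) * a ^ 3 - (1 / 27) * b ^ 2) * mu ^ 4
    h ≠ 0 →
    y ^ 2 * D = (2 ^ 36 * 3 ^ 36 * a ^ 2 / D ^ 4) * h ^ 3 →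
    let lam' := 3 * lam
    let mu' := mu
    let y' := y * D ^ 3 / (2 ^ 18 * 3 ^ 16 * a * h)
    y' ^ 2 = D * (a * lam' ^ 4 + 6 * b * lam' ^ 3 * mu' - 2 * a ^ 2 * lam' ^ 2 * mu' ^ 2 -
      2 * a * b * lam' * mu' ^ 3 + (-a ^ 3 / 3 - 3 * b ^ 2) * mu' ^ 4) := by
  intro D h hh hy lam' mu' y'
  have hD : D ≠ 0 := by simp only [D]; intro h'; apply hab; linarith [mul_eq_zero.mp h']
  have key : y ^ 2 * D ^ 5 = 2 ^ 36 * 3 ^ 36 * a ^ 2 * h ^ 3 := by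
    field_simp at hy
    linear_combination hy
  have hden : (2 ^ 18 * 3 ^ 16 * a * h : ℚ) ≠ 0 := by positivity
  have hRHS : D * (a * lam' ^ 4 + 6 * b * lam' ^ 3 * mu' - 2 * a ^ 2 * lam' ^ 2 * mu' ^ 2 -
      2 * a * b * lam' * mu' ^ 3 + (-a ^ 3 / 3 - 3 * b ^ 2) * mu' ^ 4) = 81 * D * h := by
    simp only [lam', mu', h]; ring
  rw [hRHS]
  show (y * D ^ 3 / (2 ^ 18 * 3 ^ 16 * a * h)) ^ 2 = 81 * D * h
  rw [div_pow, div_eq_iff (by positivity)]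
  linear_combination D * key
end

section
/- Let E: y² = x³ + ax + b with 4a³+27b² ≠ 0, and let (x₁,...,x₆) satisfy the nine quadrics s₁,...,s₉ defining X⁻_E(6). Setting u = x₂x₆ - x₃x₅, v = x₃x₄ - x₁x₆, y = x₁x₅ - x₂x₄, the triple (u,v,y) satisfies y³ = Δ_E(v³ + au²v + bu³). -/
theorem minors_land_on_CYminus (a b x1 x2 x3 x4 x5 x6 : ℚ)
    (hab : 4 * a ^ 3 + 27 * b ^ 2 ≠ 0)
    (h : OnXminus6 a b x1 x2 x3 x4 x5 x6) :
    let u := x2 * x6 - x3 * x5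
    let v := x3 * x4 - x1 * x6
    let y := x1 * x5 - x2 * x4
    y ^ 3 = D a b * (v ^ 3 + a * u ^ 2 * v + b * u ^ 3) := by
  obtain ⟨h1, h2, h3, h4, h5, h6, h7, h8, h9⟩ := h
  simp only [s1, s2, s3, s4, s5, s6, s7, s8, s9, D] at h1 h2 h3 h4 h5 h6 h7 h8 h9 ⊢
  linear_combination ((-7/6:ℚ)*x2^2*x4^2 + (-5/6:ℚ)*x2^3*x4 + (-1/6:ℚ)*x2^4 + (2/3:ℚ)*x1*x2*x4*x5 + (1/6:ℚ)*x1*x2^2*x5 + (-1/6:ℚ)*x1^2*x5^2 + -11*b*x4^3*x6 + 13*b*x3*x4^2*x5 + -1*b*x2*x4^2*x6 + -8*b*x2*x3*x4*x5 + 4*b*x2^2*x4*x6 + -12*b*x2^2*x3*x5 + -12*b*x2^3*x6 + -2*b*x1*x4*x5*x6 + 144*b^2*x4^2*x6^2 + -264*b^2*x3*x4*x5*x6 + -84*b^2*x3^2*x5^2 + -288*b^2*x3^3*x4 + -96*b^2*x2*x4*x6^2 + 72*b^2*x2*x3^3 + 12*b^2*x2^2*x6^2 + -1260*b^3*x4*x6^3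 + 828*b^3*x3*x5*x6^2 + -1728*b^3*x3^3*x6 + 828*b^3*x2*x6^3 + (8/3:ℚ)*a*x3*x4^3 + (5/18:ℚ)*a*x2*x4*x5^2 + (-20/3:ℚ)*a*x2*x3*x4^2 + (1/9:ℚ)*a*x2^2*x5^2 + (-2/3:ℚ)*a*x2^2*x3*x4 + (-26/3:ℚ)*a*x2^3*x3 + (-1/18:ℚ)*a*x1*x5^3 + (-2/3:ℚ)*a*x1*x3*x4*x5 + (10/3:ℚ)*a*x1*x2*x4*x6 + (-2/3:ℚ)*a*x1*x2*x3*x5 + (4/3:ℚ)*a*x1*x2^2*x6 + (-2/3:ℚ)*a*x1^2*x5*x6 + (37/3:ℚ)*a*b*x4*x5^2*x6 + 15*a*b*x3*x5^3 + 20*a*b*x3^2*x4*x5 + (29/3:ℚ)*a*b*x2*x5^2*x6 + -56*a*b*x2*x3*x4*x6 + -60*a*b*x2*x3^2*x5 + -40*a*b*x2^2*x3*x6 + -16*a*b*x1*x4*x6^2 + -8*a*b*x1*x2*x6^2 + 148*a*b^2*x5^2*x6^2 + -312*a*b^2*x3*x4*x6^2 + -600*a*b^2*x3^2*x5*x6 +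 672*a*b^2*x2*x3*x6^2 + 48*a*b^2*x1*x6^3 + -4464*a*b^3*x3*x6^3 + (-1/54:ℚ)*a^2*x5^4 + (-4/3:ℚ)*a^2*x4^2*x5*x6 + (22/9:ℚ)*a^2*x3*x4*x5^2 + (-88/3:ℚ)*a^2*x3^2*x4^2 + (58/9:ℚ)*a^2*x2*x4*x5*x6 + (38/9:ℚ)*a^2*x2*x3*x5^2 + (32/3:ℚ)*a^2*x2*x3^2*x4 + (46/9:ℚ)*a^2*x2^2*x5*x6 + -32*a^2*x2^2*x3^2 + (-2/3:ℚ)*a^2*x1*x5^2*x6 + (-16/3:ℚ)*a^2*x1*x3*x4*x6 + (-16/3:ℚ)*a^2*x1*x2*x3*x6 + (-8/3:ℚ)*a^2*x1^2*x6^2 + -36*a^2*b*x4*x5*x6^2 + 52*a^2*b*x3*x5^2*x6 + -352*a^2*b*x3^2*x4*x6 + -624*a^2*b*x3^3*x5 + 48*a^2*b*x2*x5*x6^2 + -176*a^2*b*x2*x3^2*x6 + -16*a^2*b*x1*x3*x6^2 + -472*a^2*b^2*x5*x6^3 + -1440*a^2*b^2*x3^2*x6^2 + (-10/27:ℚ)*a^3*x5^3*x6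 + (-32/3:ℚ)*a^3*x4^2*x6^2 + -32*a^3*x3*x4*x5*x6 + (40/3:ℚ)*a^3*x3^2*x5^2 + (-80/9:ℚ)*a^3*x2*x4*x6^2 + 40*a^3*x2*x3*x5*x6 + -128*a^3*x2*x3^3 + (40/9:ℚ)*a^3*x2^2*x6^2 + (-16/3:ℚ)*a^3*x1*x5*x6^2 + (-560/3:ℚ)*a^3*b*x4*x6^3 + (-352/3:ℚ)*a^3*b*x3*x5*x6^2 + 1024*a^3*b*x3^3*x6 + (-656/3:ℚ)*a^3*b*x2*x6^3 + -160*a^3*b^2*x6^4 + (-32/9:ℚ)*a^4*x5^2*x6^2 + (320/9:ℚ)*a^4*x3*x4*x6^2 + (1216/9:ℚ)*a^4*x3^2*x5*x6 + (-1856/9:ℚ)*a^4*x2*x3*x6^2 + (32/9:ℚ)*a^4*x1*x6^3 + -1216*a^4*b*x3*x6^3 + (-64/27:ℚ)*a^5*x5*x6^3 + (-5632/9:ℚ)*a^5*x3^2*x6^2 + (256/27:ℚ)*a^6*x6^4) * h1 +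
      (-13*b*x4^2*x5^2 + 24*b*x3*x4^3 + 8*b*x2*x4*x5^2 + 12*b*x2^2*x5^2 + 36*b^2*x4*x5^2*x6 + 84*b^2*x3*x5^3 + 180*b^2*x3*x4^2*x6 + 288*b^2*x3^2*x4*x5 + -180*b^2*x2*x5^2*x6 + -72*b^2*x2*x3^2*x5 + -288*b^2*x1*x4*x6^2 + 2124*b^3*x5^2*x6^2 + 6048*b^3*x3*x4*x6^2 + -648*b^3*x3^2*x5*x6 + -3240*b^3*x2*x3*x6^2 + 20736*b^4*x3*x6^3 + -10*a*x4^3*x5 + (8/3:ℚ)*a*x2*x4^2*x5 + (16/3:ℚ)*a*x2^2*x4*x5 + 2*a*x2^3*x5 + -15*a*b*x5^4 + 138*a*b*x4^2*x5*x6 + -172*a*b*x3*x4*x5^2 + -312*a*b*x3^2*x4^2 + 20*a*b*x2*x4*x5*x6 + -60*a*b*x2*x3*x5^2 + 56*a*b*x2^2*x5*x6 + -48*a*b*x1^2*x6^2 + -2088*a*b^2*x4*x5*x6^2 + 1992*a*b^2*x3*x5^2*x6 + 1440*a*b^2*x3^2*x4*x6 + -1584*a*b^2*x3^3*x5 + 2268*a*b^2*x2*x5*x6^2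 + -3744*a*b^2*x2*x3^2*x6 + 288*a*b^2*x1*x3*x6^2 + -288*a*b^3*x5*x6^3 + 10368*a*b^3*x3^2*x6^2 + (56/9:ℚ)*a^2*x4*x5^3 + (40/3:ℚ)*a^2*x4^3*x6 + (44/3:ℚ)*a^2*x3*x4^2*x5 + (16/9:ℚ)*a^2*x2*x5^3 + (64/3:ℚ)*a^2*x2*x4^2*x6 + -8*a^2*x2*x3*x4*x5 + (16/3:ℚ)*a^2*x2^2*x4*x6 + (88/3:ℚ)*a^2*x2^2*x3*x5 + (8/3:ℚ)*a^2*x2^3*x6 + (250/3:ℚ)*a^2*b*x5^3*x6 + -404*a^2*b*x4^2*x6^2 + -224*a^2*b*x3*x4*x5*x6 + 416*a^2*b*x3^2*x5^2 + 576*a^2*b*x3^3*x4 + -176*a^2*b*x2*x4*x6^2 + 1424*a^2*b*x2*x3*x5*x6 + -1248*a^2*b*x2*x3^3 + -160*a^2*b*x2^2*x6^2 + 3168*a^2*b^2*x4*x6^3 + -5736*a^2*b^2*x3*x5*x6^2 + 3456*a^2*b^2*x3^3*x6 + -3096*a^2*b^2*x2*x6^3 + -25920*a^2*b^3*x6^4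 + (-88/9:ℚ)*a^3*x4*x5^2*x6 + (-244/9:ℚ)*a^3*x3*x5^3 + (-488/3:ℚ)*a^3*x3*x4^2*x6 + -256*a^3*x3^2*x4*x5 + (-232/9:ℚ)*a^3*x2*x5^2*x6 + -160*a^3*x2*x3*x4*x6 + (112/3:ℚ)*a^3*x2*x3^2*x5 + (-544/3:ℚ)*a^3*x2^2*x3*x6 + -64*a^3*x1*x4*x6^2 + -292*a^3*b*x5^2*x6^2 + 1920*a^3*b*x3*x4*x6^2 + -3184*a^3*b*x3^2*x5*x6 + -2528*a^3*b*x2*x3*x6^2 + -14976*a^3*b^2*x3*x6^3 + -192*a^4*x4*x5*x6^2 + (8/9:ℚ)*a^4*x3*x5^2*x6 + (2816/3:ℚ)*a^4*x3^2*x4*x6 + (704/9:ℚ)*a^4*x2*x5*x6^2 + 32*a^4*x2*x3^2*x6 + 128*a^4*x1*x3*x6^2 + (4112/3:ℚ)*a^4*b*x5*x6^3 + 2048*a^4*b*x3^2*x6^2 + (3584/9:ℚ)*a^5*x4*x6^3 + (8480/9:ℚ)*a^5*x3*x5*x6^2 + (-1664/9:ℚ)*a^5*x2*x6^3 + -3840*a^5*b*x6^4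 + (-7168/3:ℚ)*a^6*x3*x6^3) * h2 +
      ((-11/3:ℚ)*x4^3*x5 + (-11/3:ℚ)*x2*x4^2*x5 + -4*x2^3*x5 + 72*b*x4^2*x5*x6 + -76*b*x3*x4*x5^2 + -156*b*x3^2*x4^2 + -60*b*x2*x3*x5^2 + 8*b*x2^2*x5*x6 + -24*b*x1^2*x6^2 + -468*b^2*x4*x5*x6^2 + 984*b^2*x3*x5^2*x6 + 864*b^2*x3^2*x4*x6 + -792*b^2*x3^3*x5 + 276*b^2*x2*x5*x6^2 + -1080*b^2*x2*x3^2*x6 + 6912*b^3*x3^2*x6^2 + (41/9:ℚ)*a*x4*x5^3 + (4/3:ℚ)*a*x4^3*x6 + -6*a*x3*x4^2*x5 + (29/9:ℚ)*a*x2*x5^3 + (68/3:ℚ)*a*x2*x4^2*x6 + 4*a*x2*x3*x4*x5 + (-32/3:ℚ)*a*x2^2*x4*x6 + (-8/3:ℚ)*a*x2^3*x6 + 48*a*b*x5^3*x6 + -96*a*b*x4^2*x6^2 + -136*a*b*x3*x4*x5*x6 + -104*a*b*x3^2*x5^2 + 288*a*b*x3^3*x4 + 288*a*b*x2*x4*x6^2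 + 812*a*b*x2*x3*x5*x6 + -624*a*b*x2*x3^3 + 8*a*b*x2^2*x6^2 + 1296*a*b^2*x4*x6^3 + -2688*a*b^2*x3*x5*x6^2 + 1728*a*b^2*x3^3*x6 + -1296*a*b^2*x2*x6^3 + 1152*a*b^3*x6^4 + (-208/9:ℚ)*a^2*x4*x5^2*x6 + (-62/9:ℚ)*a^2*x3*x5^3 + -28*a^2*x3*x4^2*x6 + -128*a^2*x3^2*x4*x5 + (4/3:ℚ)*a^2*x2*x5^2*x6 + -16*a^2*x2*x3*x4*x6 + (-136/3:ℚ)*a^2*x2*x3^2*x5 + 16*a^2*x1*x2*x6^2 + -360*a^2*b*x5^2*x6^2 + 800*a^2*b*x3*x4*x6^2 + 168*a^2*b*x3^2*x5*x6 + -1288*a^2*b*x2*x3*x6^2 + -96*a^2*b*x1*x6^3 + -4032*a^2*b^2*x3*x6^3 + (-32/9:ℚ)*a^3*x4*x5*x6^2 + 36*a^3*x3*x5^2*x6 + (1408/3:ℚ)*a^3*x3^2*x4*x6 + (-368/3:ℚ)*a^3*x2*x5*x6^2 + 272*a^3*x2*x3^2*x6 + (1280/3:ℚ)*a^3*b*x5*x6^3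 + -640*a^3*b*x3^2*x6^2 + (1408/9:ℚ)*a^4*x4*x6^3 + (-400/3:ℚ)*a^4*x3*x5*x6^2 + (1792/9:ℚ)*a^4*x2*x6^3 + (1408/3:ℚ)*a^4*b*x6^4 + (-1024/9:ℚ)*a^5*x3*x6^3) * h3 +
      ((-1/3:ℚ)*x2^2*x4^2 + (8/3:ℚ)*x2^3*x4 + 4*x2^4 + -8*b*x4*x5^3 + 4*b*x4^3*x6 + -14*b*x3*x4^2*x5 + (-16/3:ℚ)*b*x2*x5^3 + 22*b*x2*x4^2*x6 + -36*b*x2*x3*x4*x5 + 164*b^2*x5^3*x6 + -312*b^2*x4^2*x6^2 + 684*b^2*x3*x4*x5*x6 + -276*b^2*x3^2*x5^2 + -1368*b^2*x3^3*x4 + -336*b^2*x2*x4*x6^2 + 348*b^2*x2*x3*x5*x6 + 144*b^2*x2*x3^3 + 5472*b^3*x4*x6^3 + -1080*b^3*x3*x5*x6^2 + 1296*b^3*x3^3*x6 + 2232*b^3*x2*x6^3 + -19872*b^4*x6^4 + -1*a*x4^2*x5^2 + (-16/3:ℚ)*a*x2*x3*x4^2 + (-5/9:ℚ)*a*x2^2*x5^2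 + 8*a*x1*x4^2*x6 + -16*a*x1*x2^2*x6 + (22/3:ℚ)*a*b*x4*x5^2*x6 + 28*a*b*x3*x5^3 + 8*a*b*x3*x4^2*x6 + 204*a*b*x3^2*x4*x5 + (236/3:ℚ)*a*b*x2*x5^2*x6 + -168*a*b*x2*x3*x4*x6 + -376*a*b^2*x5^2*x6^2 + 312*a*b^2*x3*x4*x6^2 + -4176*a*b^2*x3^2*x5*x6 + 3168*a*b^2*x3^4 + 3192*a*b^2*x2*x3*x6^2 + -3312*a*b^3*x3*x6^3 + (-35/27:ℚ)*a^2*x5^4 + (8/3:ℚ)*a^2*x4^2*x5*x6 + (32/9:ℚ)*a^2*x3*x4*x5^2 + (80/3:ℚ)*a^2*x3^2*x4^2 + (16/9:ℚ)*a^2*x2*x4*x5*x6 + (64/3:ℚ)*a^2*x2*x3^2*x4 + (-68/3:ℚ)*a^2*x2^2*x5*x6 + (592/3:ℚ)*a^2*b*x4*x5*x6^2 + 88*a^2*b*x3*x5^2*x6 + -968*a^2*b*x3^2*x4*x6 + -1184*a^2*b*x3^3*x5 + (-80/3:ℚ)*a^2*b*x2*x5*x6^2 + -144*a^2*b*x2*x3^2*x6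 + -280*a^2*b^2*x5*x6^3 + 3024*a^2*b^2*x3^2*x6^2 + (64/27:ℚ)*a^3*x5^3*x6 + (16/3:ℚ)*a^3*x4^2*x6^2 + (-512/9:ℚ)*a^3*x3*x4*x5*x6 + (296/9:ℚ)*a^3*x3^2*x5^2 + -256*a^3*x3^3*x4 + (224/9:ℚ)*a^3*x2*x4*x6^2 + -256*a^3*x2*x3^3 + (1184/9:ℚ)*a^3*x2^2*x6^2 + (-1544/3:ℚ)*a^3*b*x4*x6^3 + 888*a^3*b*x3*x5*x6^2 + 288*a^3*b*x3^3*x6 + (-392/3:ℚ)*a^3*b*x2*x6^3 + -2576*a^3*b^2*x6^4 + (320/9:ℚ)*a^4*x5^2*x6^2 + -128*a^4*x3*x4*x6^2 + (464/3:ℚ)*a^4*x3^2*x5*x6 + (-560/3:ℚ)*a^4*x2*x3*x6^2 + -64*a^4*x1*x6^3 + -4000*a^4*b*x3*x6^3 + (-9280/27:ℚ)*a^5*x5*x6^3 + (-4736/9:ℚ)*a^5*x3^2*x6^2 + (12800/27:ℚ)*a^6*x6^4) * h4 +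
      ((-1/3:ℚ)*x4^4 + -2*x2^3*x4 + (-1/3:ℚ)*x2^4 + (-20/3:ℚ)*b*x4*x5^3 + 4*b*x4^3*x6 + 8*b*x3*x4^2*x5 + 20*b^2*x5^3*x6 + -36*b^2*x4^2*x6^2 + -504*b^2*x3*x4*x5*x6 + -432*b^2*x3^3*x4 + 144*b^2*x2*x3^3 + -2592*b^3*x4*x6^3 + 2664*b^3*x3*x5*x6^2 + -2592*b^3*x3^3*x6 + 72*b^3*x2*x6^3 + 15120*b^4*x6^4 + -2*a*x4^2*x5^2 + (-20/9:ℚ)*a*x2*x4*x5^2 + (10/9:ℚ)*a*x2^2*x5^2 + 16*a*x1*x2*x4*x6 + 4*a*x1*x2^2*x6 + (88/3:ℚ)*a*b*x4*x5^2*x6 + (76/3:ℚ)*a*b*x3*x5^3 + 84*a*b^2*x5^2*x6^2 + 2160*a*b^2*x3^2*x5*x6 + 8928*a*b^3*x3*x6^3 + (-34/27:ℚ)*a^2*x5^4 + (-272/9:ℚ)*a^2*x4^2*x5*x6 + (16/9:ℚ)*a^2*x2*x4*x5*x6 + (20/9:ℚ)*a^2*x2^2*x5*x6 + -16*a^2*x1^2*x6^2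 + -16*a^2*b*x4*x5*x6^2 + (-656/3:ℚ)*a^2*b*x3*x5^2*x6 + -1104*a^2*b^2*x5*x6^3 + -384*a^2*b^2*x3^2*x6^2 + (-44/27:ℚ)*a^3*x5^3*x6 + (320/9:ℚ)*a^3*x4^2*x6^2 + (-224/9:ℚ)*a^3*x2*x4*x6^2 + (16/3:ℚ)*a^3*x2^2*x6^2 + (-1216/3:ℚ)*a^3*b*x4*x6^3 + (-1376/3:ℚ)*a^3*b*x3*x5*x6^2 + (640/3:ℚ)*a^3*b*x2*x6^3 + 2496*a^3*b^2*x6^4 + (1136/27:ℚ)*a^4*x5^2*x6^2 + (3328/3:ℚ)*a^4*b*x3*x6^3 + (-1024/9:ℚ)*a^5*x5*x6^3 + (1024/27:ℚ)*a^6*x6^4) * h5 +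
      (-72*b*x3^2*x4^2 + -864*b^2*x3^2*x4*x6 + -3456*b^3*x3^2*x6^2 + -8*a*x4^3*x6 + -80*a*b*x4^2*x6^2 + 32*a^2*x1*x2*x6^2 + -64*a^4*x4*x6^3 + -128*a^4*x2*x6^3 + -256*a^4*b*x6^4) * h6 +
      ((2/3:ℚ)*x3*x4^3) * h7
end
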